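/- arXiv:2004.10358 — 8 statements merged into one kernel-verified Lean document; each statement's English description precedes it below -/
import Mathlib

section
/- Let 0 < L ≤ U, let α ≥ 1, and let ω satisfy 1/α ≤ ω ≤ 1. Let ϕ : ℝ → ℝ be continuous and strictly increasing on [ω,1], differentiable on [ω,1], with ϕ(ω) = L, ϕ(1) ≥ U, and α·ϕ(y) ≥ ϕ'(y) for all y ∈ [ω,1]. For b ∈ [L,U] define Y(b) = sSup { y ∈ [ω,1] : ϕ(y) ≤ b }. Let N ≥ 1 and b : Fin N → [L,U] be any sequence; set m_i = max_{j ≤ i} b_j, y_0 = 0, y_i = Y(m_i) for i ≥ 1, and x_i = y_i − y_{i−1}. Then y_N ≤ 1 (budget feasibility) and max_{i} b_i ≤ α · Σ_{i=1}^N b_i·x_i. -/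
theorem otp_threshold_algorithm_sufficiency
    (L U α ω : ℝ) (hL : 0 < L) (hLU : L ≤ U) (hα : 1 ≤ α)
    (hω : 1 / α ≤ ω) (hω1 : ω ≤ 1)
    (ϕ ϕ' : ℝ → ℝ)
    (hcont : ContinuousOn ϕ (Set.Icc ω 1))
    (hmono : StrictMonoOn ϕ (Set.Icc ω 1))
    (hderiv : ∀ y ∈ Set.Icc ω 1, HasDerivWithinAt ϕ (ϕ' y) (Set.Icc ω 1) y)
    (hϕω : ϕ ω = L) (hϕ1 : U ≤ ϕ 1)
    (hineq : ∀ y ∈ Set.Icc ω 1, ϕ' y ≤ α * ϕ y)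
    (Y : ℝ → ℝ) (hY : ∀ v : ℝ, Y v = sSup {y : ℝ | y ∈ Set.Icc ω 1 ∧ ϕ y ≤ v})
    (N : ℕ) (hN : 0 < N)
    (b : Fin N → ℝ) (hb : ∀ i, b i ∈ Set.Icc L U)
    (m : Fin N → ℝ) (hm : ∀ i, m i = (Finset.Iic i).sup' Finset.nonempty_Iic b)
    (y : ℕ → ℝ) (hy0 : y 0 = 0) (hy : ∀ i : Fin N, y (i.val + 1) = Y (m i))
    (x : Fin N → ℝ) (hx : ∀ i : Fin N, x i = y (i.val + 1) - y i.val) :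
    y N ≤ 1 ∧
    Finset.univ.sup' (Finset.univ_nonempty_iff.mpr (Fin.pos_iff_nonempty.mp hN)) b ≤
      α * ∑ i : Fin N, b i * x i := by
  have hα0 : (0:ℝ) < α := lt_of_lt_of_le one_pos hα
  have hω0 : (0:ℝ) < ω := lt_of_lt_of_le (by positivity) hω
  have hαω : 1 ≤ α * ω := by
    rw [div_le_iff₀ hα0] at hω; nlinarith
  have hωIcc : ω ∈ Set.Icc ω 1 := Set.left_mem_Icc.2 hω1
  -- Y is the inverse of ϕ on [L, U]
  have hYkey : ∀ v ∈ Set.Icc L U, Y v ∈ Set.Icc ω 1 ∧ ϕ (Y v) = v := by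
    intro v hv
    obtain ⟨c, hc, hϕc⟩ := intermediate_value_Icc hω1 hcont
      ⟨by rw [hϕω]; exact hv.1, le_trans hv.2 hϕ1⟩
    have hYc : Y v = c := by
      rw [hY]
      apply le_antisymm
      · refine csSup_le ⟨ω, hωIcc, by rw [hϕω]; exact hv.1⟩ ?_
        intro z hz
        by_contra h
        push_neg at h
        exact absurd hz.2 (not_le.2 (hϕc ▸ hmono hc hz.1 h))
      · exact le_csSup ⟨1, fun z hz => hz.1.2⟩ ⟨hc, hϕc.le⟩
    rw [hYc]; exact ⟨hc, hϕc⟩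
  have hYmono : ∀ v ∈ Set.Icc L U, ∀ w ∈ Set.Icc L U, v ≤ w → Y v ≤ Y w := by
    intro v hv w hw hvw
    by_contra h
    push_neg at h
    have := hmono (hYkey w hw).1 (hYkey v hv).1 h
    rw [(hYkey w hw).2, (hYkey v hv).2] at this
    linarith
  -- properties of m
  have hmb : ∀ i, b i ≤ m i := fun i => by
    rw [hm]; exact Finset.le_sup' b (Finset.mem_Iic.2 le_rfl)
  have hmIcc : ∀ i, m i ∈ Set.Icc L U := by
    intro i
    refine ⟨le_trans (hb i).1 (hmb i), ?_⟩
    rw [hm]; exact Finset.sup'_le _ _ fun j _ => (hb j).2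
  have hmmono : ∀ i j : Fin N, i ≤ j → m i ≤ m j := by
    intro i j hij
    rw [hm, hm]
    exact Finset.sup'_le _ _ fun k hk =>
      Finset.le_sup' b (Finset.mem_Iic.2 (le_trans (Finset.mem_Iic.1 hk) hij))
  -- properties of y
  have hyIcc : ∀ k, ∀ hk : k < N, y (k+1) ∈ Set.Icc ω 1 := fun k hk => by
    rw [hy ⟨k, hk⟩]; exact (hYkey _ (hmIcc _)).1
  have hyϕ : ∀ k, ∀ hk : k < N, ϕ (y (k+1)) = m ⟨k, hk⟩ := fun k hk => by
    rw [hy ⟨k, hk⟩]; exact (hYkey _ (hmIcc _)).2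
  have hystep : ∀ k, ∀ hk : k + 1 < N, y (k+1) ≤ y (k+2) := by
    intro k hk
    have hk' : k < N := Nat.lt_of_succ_lt hk
    rw [hy ⟨k, hk'⟩, hy ⟨k+1, hk⟩]
    exact hYmono _ (hmIcc _) _ (hmIcc _) (hmmono _ _ (by simp [Fin.le_def]))
  -- integrability and integral comparison
  have hint : ∀ a ∈ Set.Icc ω 1, ∀ c ∈ Set.Icc ω 1,
      IntervalIntegrable ϕ MeasureTheory.volume a c := by
    intro a ha c hc
    exact (hcont.mono (Set.uIcc_subset_Icc ha hc)).intervalIntegrable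
  have hintle : ∀ a ∈ Set.Icc ω 1, ∀ c ∈ Set.Icc ω 1, a ≤ c →
      (∫ t in a..c, ϕ t) ≤ ϕ c * (c - a) := by
    intro a ha c hc hac
    have h1 : (∫ t in a..c, ϕ t) ≤ ∫ _ in a..c, ϕ c := by
      refine intervalIntegral.integral_mono_on hac (hint a ha c hc)
        intervalIntegrable_const ?_
      intro t ht
      rcases eq_or_lt_of_le ht.2 with h | h
      · rw [h]
      · exact (hmono ⟨le_trans ha.1 ht.1, le_trans ht.2 hc.2⟩ hc h).le
    rw [intervalIntegral.integral_const, smul_eq_mul] at h1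
    linarith
  -- per-step inequality for steps k+1, k+1 < N
  have hkey : ∀ k, ∀ hk : k + 1 < N,
      (∫ t in (y (k+1))..(y (k+2)), ϕ t) ≤ b ⟨k+1, hk⟩ * x ⟨k+1, hk⟩ := by
    intro k hk
    have hk' : k < N := Nat.lt_of_succ_lt hk
    have hA := hyIcc k hk'
    have hB := hyIcc (k+1) hk
    have hle := hystep k hk
    have hxval : x ⟨k+1, hk⟩ = y (k+2) - y (k+1) := hx ⟨k+1, hk⟩
    rcases eq_or_lt_of_le hle with heq | hlt
    · rw [heq, intervalIntegral.integral_same, hxval, ← heq]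
      simp
    · -- m jumped, so b (k+1) attains the max
      have hmlt : m ⟨k, hk'⟩ < m ⟨k+1, hk⟩ := by
        have := hmono hA hB hlt
        rwa [hyϕ k hk', hyϕ (k+1) hk] at this
      have hbm : b ⟨k+1, hk⟩ = m ⟨k+1, hk⟩ := by
        obtain ⟨j, hj, hje⟩ := Finset.exists_mem_eq_sup' (Finset.nonempty_Iic (a := (⟨k+1, hk⟩ : Fin N))) b
        have hjle : j.val ≤ k + 1 := Fin.le_def.1 (Finset.mem_Iic.1 hj)
        rcases Nat.lt_or_ge j.val (k+1) with hlt' | hge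
        · exfalso
          have hb' : b j ≤ m ⟨k, hk'⟩ := by
            rw [hm]
            exact Finset.le_sup' b (Finset.mem_Iic.2 (Fin.le_def.2 (by simp only [Fin.val_mk]; omega)))
          have : m ⟨k+1, hk⟩ ≤ m ⟨k, hk'⟩ := by rw [hm ⟨k+1, hk⟩, hje]; exact hb'
          linarith
        · have hje2 : j = ⟨k+1, hk⟩ := Fin.ext (le_antisymm hjle hge)
          rw [hm ⟨k+1, hk⟩, hje, hje2]
      have hbϕ : b ⟨k+1, hk⟩ = ϕ (y (k+2)) := by rw [hbm, hyϕ (k+1) hk]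
      calc (∫ t in (y (k+1))..(y (k+2)), ϕ t) ≤ ϕ (y (k+2)) * (y (k+2) - y (k+1)) :=
            hintle _ hA _ hB hle
        _ = b ⟨k+1, hk⟩ * x ⟨k+1, hk⟩ := by rw [hbϕ, hxval]
  -- main induction
  have main : ∀ n, n ≤ N → 1 ≤ n →
      L * ω + (∫ t in ω..(y n), ϕ t) ≤
        ∑ k ∈ Finset.range n, (if h : k < N then b ⟨k, h⟩ * x ⟨k, h⟩ else 0) := by
    intro n
    induction n with
    | zero => intro _ h; omega
    | succ n ih =>
      intro hn1 _
      cases n with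
      | zero =>
        -- base case: n = 1
        have h0 : (0:ℕ) < N := hN
        have hm0 : m ⟨0, hN⟩ = b ⟨0, hN⟩ := by
          apply le_antisymm
          · rw [hm]
            apply Finset.sup'_le
            intro j hj
            have hj0 : j = ⟨0, hN⟩ := Fin.ext (Nat.le_zero.1 (Fin.le_def.1 (Finset.mem_Iic.1 hj)))
            rw [hj0]
          · exact hmb _
        have hy1 : y 1 ∈ Set.Icc ω 1 := hyIcc 0 hN
        have hϕy1 : ϕ (y 1) = b ⟨0, hN⟩ := by rw [hyϕ 0 hN, hm0]
        have hx0 : x ⟨0, hN⟩ = y 1 := by rw [hx ⟨0, hN⟩]; simp [hy0]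
        have hLϕ : L ≤ ϕ (y 1) := by
          rcases eq_or_lt_of_le hy1.1 with h | h
          · rw [← h, hϕω]
          · rw [← hϕω]; exact (hmono hωIcc hy1 h).le
        have hI : (∫ t in ω..(y 1), ϕ t) ≤ ϕ (y 1) * (y 1 - ω) :=
          hintle ω hωIcc _ hy1 hy1.1
        rw [Finset.sum_range_one, dif_pos hN, hϕy1.symm, hx0]
        nlinarith [hy1.1, hω0]
      | succ k =>
        have hk1 : k + 1 < N := hn1
        have hk' : k < N := Nat.lt_of_succ_lt hk1
        have ihh := ih (le_of_lt hn1) (Nat.one_le_iff_ne_zero.2 (Nat.succ_ne_zero k))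
        have hadd : (∫ t in ω..(y (k+1)), ϕ t) + (∫ t in (y (k+1))..(y (k+2)), ϕ t)
            = ∫ t in ω..(y (k+2)), ϕ t :=
          intervalIntegral.integral_add_adjacent_intervals
            (hint ω hωIcc _ (hyIcc k hk')) (hint _ (hyIcc k hk') _ (hyIcc (k+1) hk1))
        rw [Finset.sum_range_succ, dif_pos hk1]
        have := hkey k hk1
        linarith
  have mainN := main N le_rfl hN
  -- convert the sum
  have hsum : (∑ k ∈ Finset.range N, (if h : k < N then b ⟨k, h⟩ * x ⟨k, h⟩ else 0))
      = ∑ i : Fin N, b i * x i := by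
    rw [← Fin.sum_univ_eq_sum_range (fun k => if h : k < N then b ⟨k, h⟩ * x ⟨k, h⟩ else 0) N]
    exact Finset.sum_congr rfl fun i _ => by simp [i.isLt]
  rw [hsum] at mainN
  -- final point facts
  have hNN : N - 1 < N := Nat.sub_lt hN one_pos
  have hNsucc : (N - 1) + 1 = N := Nat.succ_pred_eq_of_pos hN
  have hyNIcc : y N ∈ Set.Icc ω 1 := by
    have := hyIcc (N-1) hNN; rwa [hNsucc] at this
  have hϕyN : ϕ (y N) = m ⟨N-1, hNN⟩ := by
    have := hyϕ (N-1) hNN; rwa [hNsucc] at this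
  have hsupm : Finset.univ.sup'
      (Finset.univ_nonempty_iff.mpr (Fin.pos_iff_nonempty.mp hN)) b ≤ m ⟨N-1, hNN⟩ := by
    apply Finset.sup'_le
    intro j _
    rw [hm]
    exact Finset.le_sup' b (Finset.mem_Iic.2 (by
      simp only [Fin.le_def]
      omega))
  -- Gronwall-type bound: ϕ (y N) ≤ L + α * ∫
  set c : ℝ → ℝ := fun t => max ω (min t 1) with hcdef
  have hcCont : Continuous c := continuous_const.max (continuous_id.min continuous_const)
  have hcmem : ∀ t, c t ∈ Set.Icc ω 1 :=
    fun t => ⟨le_max_left _ _, max_le hω1 (min_le_right _ _)⟩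
  have hceq : ∀ t ∈ Set.Icc ω 1, c t = t := fun t ht => by
    simp only [hcdef, min_eq_left ht.2, max_eq_right ht.1]
  have hψCont : Continuous fun t => α * ϕ (c t) :=
    continuous_const.mul (hcont.comp_continuous hcCont hcmem)
  have hΦ : ∀ t : ℝ, HasDerivAt (fun u => ∫ s in ω..u, α * ϕ (c s)) (α * ϕ (c t)) t := by
    intro t
    exact intervalIntegral.integral_hasDerivAt_right
      (hψCont.intervalIntegrable _ _)
      (hψCont.stronglyMeasurableAtFilter _ _)
      hψCont.continuousAt
  have hgmono : MonotoneOn (fun t => (∫ s in ω..t, α * ϕ (c s)) - ϕ t) (Set.Icc ω 1) := by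
    apply monotoneOn_of_hasDerivWithinAt_nonneg (f' := fun t => α * ϕ t - ϕ' t)
      (convex_Icc ω 1)
    · exact ((continuous_iff_continuousAt.2 fun t => (hΦ t).continuousAt).continuousOn).sub hcont
    · intro t ht
      rw [interior_Icc] at ht ⊢
      have h1 : HasDerivWithinAt (fun u => ∫ s in ω..u, α * ϕ (c s)) (α * ϕ t) (Set.Ioo ω 1) t := by
        have := (hΦ t).hasDerivWithinAt (s := Set.Ioo ω 1)
        rwa [hceq t (Set.Ioo_subset_Icc_self ht)] at this
      exact h1.sub ((hderiv t (Set.Ioo_subset_Icc_self ht)).mono Set.Ioo_subset_Icc_self)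
    · intro t ht
      rw [interior_Icc] at ht
      have := hineq t (Set.Ioo_subset_Icc_self ht)
      linarith
  have hgle := hgmono hωIcc hyNIcc hyNIcc.1
  simp only [intervalIntegral.integral_same] at hgle
  have hIeq : (∫ s in ω..(y N), α * ϕ (c s)) = α * ∫ s in ω..(y N), ϕ s := by
    rw [← intervalIntegral.integral_const_mul]
    apply intervalIntegral.integral_congr
    intro s hs
    rw [Set.uIcc_of_le hyNIcc.1] at hs
    show α * ϕ (c s) = α * ϕ s
    rw [hceq s ⟨hs.1, le_trans hs.2 hyNIcc.2⟩]
  rw [hIeq, hϕω] at hgle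
  -- hgle : 0 - L ≤ α * ∫ - ϕ (y N)
  constructor
  · exact hyNIcc.2
  · have h1 : ϕ (y N) ≤ L + α * ∫ s in ω..(y N), ϕ s := by linarith
    have hInn : 0 ≤ ∫ s in ω..(y N), ϕ s := by
      apply intervalIntegral.integral_nonneg hyNIcc.1
      intro u hu
      have h2 : ϕ ω ≤ ϕ u := by
        rcases eq_or_lt_of_le hu.1 with h | h
        · rw [h]
        · exact (hmono hωIcc ⟨hu.1, le_trans hu.2 hyNIcc.2⟩ h).le
      rw [hϕω] at h2
      linarith
    refine le_trans hsupm ?_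
    rw [← hϕyN]
    nlinarith [mul_le_mul_of_nonneg_left mainN hα0.le, hInn,
      mul_le_mul_of_nonneg_right hαω hL.le]
end

section
/- Let 0 < L ≤ U and α > 0, and suppose ω satisfies 1/α ≤ ω ≤ 1. If there exists a differentiable function ϕ : ℝ → ℝ with ϕ(ω) = L, ϕ(1) ≥ U, and ϕ'(y) ≤ α·ϕ(y) for all y ∈ [ω,1], then α ≥ ln(U/L) + 1. -/
theorem competitive_ratio_lower_bound_for_thresholds
    (L U α ω : ℝ) (hL : 0 < L) (hLU : L ≤ U) (hα : 0 < α)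
    (hω : 1 / α ≤ ω) (hω1 : ω ≤ 1)
    (h : ∃ ϕ ϕ' : ℝ → ℝ,
      (∀ y ∈ Set.Icc ω 1, HasDerivWithinAt ϕ (ϕ' y) (Set.Icc ω 1) y) ∧
      ϕ ω = L ∧ U ≤ ϕ 1 ∧ ∀ y ∈ Set.Icc ω 1, ϕ' y ≤ α * ϕ y) :
    Real.log (U / L) + 1 ≤ α := by
  obtain ⟨ϕ, ϕ', hderiv, hϕω, hϕ1, hbound⟩ := h
  have hαω : 1 ≤ α * ω := by
    rw [div_le_iff₀ hα] at hω; linarith [mul_comm α ω]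
  -- Main inequality: U ≤ L * exp (α * (1 - ω))
  have key : U ≤ L * Real.exp (α * (1 - ω)) := by
    set g : ℝ → ℝ := fun y => ϕ y * Real.exp (-α * y) with hg
    have hg' : ∀ y ∈ Set.Icc ω 1,
        HasDerivWithinAt g ((ϕ' y - α * ϕ y) * Real.exp (-α * y)) (Set.Icc ω 1) y := by
      intro y hy
      have h1 : HasDerivWithinAt (fun y => Real.exp (-α * y))
          (Real.exp (-α * y) * (-α)) (Set.Icc ω 1) y := by
        have h0 : HasDerivAt (fun y : ℝ => -α * y) (-α) y := by
          simpa using (hasDerivAt_id y).const_mul (-α)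
        exact h0.exp.hasDerivWithinAt
      have := (hderiv y hy).mul h1
      exact this.congr_deriv (by ring)
    have hanti : AntitoneOn g (Set.Icc ω 1) := by
      apply antitoneOn_of_hasDerivWithinAt_nonpos (convex_Icc ω 1)
        (f' := fun y => (ϕ' y - α * ϕ y) * Real.exp (-α * y))
      · exact fun y hy => (hg' y hy).continuousWithinAt
      · intro y hy
        rw [interior_Icc] at hy ⊢
        exact (hg' y (Set.Ioo_subset_Icc_self hy)).mono Set.Ioo_subset_Icc_self
      · intro y hy
        rw [interior_Icc] at hy
        have hb := hbound y (Set.Ioo_subset_Icc_self hy)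
        have : ϕ' y - α * ϕ y ≤ 0 := by linarith
        exact mul_nonpos_of_nonpos_of_nonneg this (Real.exp_pos _).le
    have hle : g 1 ≤ g ω :=
      hanti (Set.left_mem_Icc.2 hω1) (Set.right_mem_Icc.2 hω1) hω1
    have : ϕ 1 * Real.exp (-α * 1) ≤ L * Real.exp (-α * ω) := by
      simpa [hg, hϕω] using hle
    have h2 : ϕ 1 ≤ L * Real.exp (α * (1 - ω)) := by
      have := mul_le_mul_of_nonneg_right this (Real.exp_pos (α * 1)).le
      rw [mul_assoc, mul_assoc, ← Real.exp_add, ← Real.exp_add] at this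
      simp only [neg_mul, neg_add_cancel, Real.exp_zero, mul_one] at this
      rw [show α * (1 - ω) = -(α * ω) + α by ring]
      exact this
    linarith
  have hU : 0 < U := lt_of_lt_of_le hL hLU
  have hlog : Real.log (U / L) ≤ α * (1 - ω) := by
    rw [Real.log_le_iff_le_exp (div_pos hU hL)]
    rw [div_le_iff₀ hL]
    linarith [key]
  nlinarith [hlog, hαω]
end

section
/- Let 0 < L ≤ U, set θ = U/L and α* = ln θ + 1, and suppose ω satisfies 1/α* ≤ ω ≤ 1. If ϕ : ℝ → ℝ is differentiable on [ω,1] with ϕ(ω) = L, ϕ(1) ≥ U, and ϕ'(y) ≤ α*·ϕ(y) for all y ∈ [ω,1], then necessarily ω = 1/α* and ϕ(1) = U. -/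
theorem optimal_threshold_breakpoint_unique
    (L U : ℝ) (hL : 0 < L) (hLU : L ≤ U)
    (ω : ℝ) (hω : 1 / (Real.log (U / L) + 1) ≤ ω) (hω1 : ω ≤ 1)
    (ϕ ϕ' : ℝ → ℝ)
    (hderiv : ∀ y ∈ Set.Icc ω 1, HasDerivWithinAt ϕ (ϕ' y) (Set.Icc ω 1) y)
    (hϕω : ϕ ω = L) (hϕ1 : U ≤ ϕ 1)
    (hineq : ∀ y ∈ Set.Icc ω 1, ϕ' y ≤ (Real.log (U / L) + 1) * ϕ y) :
    ω = 1 / (Real.log (U / L) + 1) ∧ ϕ 1 = U := by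
  set α := Real.log (U / L) + 1 with hα
  have hθ : 1 ≤ U / L := (one_le_div hL).2 hLU
  have hθpos : 0 < U / L := lt_of_lt_of_le one_pos hθ
  have hlog : 0 ≤ Real.log (U / L) := Real.log_nonneg hθ
  have hαpos : 0 < α := by simp only [hα]; linarith
  set g : ℝ → ℝ := fun y => ϕ y * Real.exp (-α * y) with hg
  have hgderiv : ∀ x ∈ Set.Icc ω 1,
      HasDerivWithinAt g ((ϕ' x - α * ϕ x) * Real.exp (-α * x)) (Set.Icc ω 1) x := by
    intro x hx
    have h0 : HasDerivAt (fun y : ℝ => -α * y) (-α) x := by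
      simpa using (hasDerivAt_id x).const_mul (-α)
    have h1 : HasDerivAt (fun y => Real.exp (-α * y)) (Real.exp (-α * x) * (-α)) x :=
      (Real.hasDerivAt_exp (-α * x)).comp x h0
    have h2 := (hderiv x hx).mul h1.hasDerivWithinAt
    exact h2.congr_deriv (by ring)
  have hA : AntitoneOn g (Set.Icc ω 1) := by
    apply antitoneOn_of_deriv_nonpos (convex_Icc ω 1)
    · intro x hx
      exact ((hgderiv x hx).continuousWithinAt)
    · intro x hx
      rw [interior_Icc] at hx
      exact ((hgderiv x (Set.Ioo_subset_Icc_self hx)).hasDerivAt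
        (Icc_mem_nhds hx.1 hx.2)).differentiableAt.differentiableWithinAt
    · intro x hx
      rw [interior_Icc] at hx
      have hd := (hgderiv x (Set.Ioo_subset_Icc_self hx)).hasDerivAt
        (Icc_mem_nhds hx.1 hx.2)
      rw [hd.deriv]
      have h3 := hineq x (Set.Ioo_subset_Icc_self hx)
      have h4 : ϕ' x - α * ϕ x ≤ 0 := by linarith
      exact mul_nonpos_of_nonpos_of_nonneg h4 (Real.exp_pos _).le
  have hmemω : ω ∈ Set.Icc ω 1 := ⟨le_refl ω, hω1⟩
  have hmem1 : (1 : ℝ) ∈ Set.Icc ω 1 := ⟨hω1, le_refl 1⟩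
  have key : g 1 ≤ g ω := hA hmemω hmem1 hω1
  have h1 : ϕ 1 * Real.exp (-α * 1) ≤ L * Real.exp (-α * ω) := by
    simpa [hg, hϕω] using key
  have hϕ1le : ϕ 1 ≤ L * Real.exp (α * (1 - ω)) := by
    have h2 := mul_le_mul_of_nonneg_right h1 (Real.exp_pos (α * 1)).le
    calc ϕ 1 = ϕ 1 * Real.exp (-α * 1) * Real.exp (α * 1) := by
              rw [mul_assoc, ← Real.exp_add]; norm_num
      _ ≤ L * Real.exp (-α * ω) * Real.exp (α * 1) := h2
      _ = L * Real.exp (α * (1 - ω)) := by rw [mul_assoc, ← Real.exp_add]; ring_nf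
  have hUle : U ≤ L * Real.exp (α * (1 - ω)) := le_trans hϕ1 hϕ1le
  have hlog2 : Real.log (U / L) ≤ α * (1 - ω) := by
    rw [Real.log_le_iff_le_exp hθpos]
    rw [div_le_iff₀ hL]
    linarith [hUle]
  have hωle : ω ≤ 1 / α := by
    rw [le_div_iff₀ hαpos]
    have : α - 1 ≤ α * (1 - ω) := by simpa [hα] using hlog2
    nlinarith
  have hωeq : ω = 1 / α := le_antisymm hωle hω
  refine ⟨hωeq, le_antisymm ?_ hϕ1⟩
  have hexp : α * (1 - ω) = Real.log (U / L) := by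
    rw [hωeq]
    field_simp
    simp only [hα]; ring
  rw [hexp, Real.exp_log hθpos] at hϕ1le
  calc ϕ 1 ≤ L * (U / L) := hϕ1le
    _ = U := by field_simp
end

section
/- Let 0 < L ≤ U, set θ = U/L and α* = ln θ + 1. If u : ℝ → ℝ is differentiable on [1/α*, 1] with u'(y) ≤ α*·u(y) for all y ∈ [1/α*, 1], u(1/α*) = L, and u(1) = U, then u(y) = (L/e)·exp(α*·y) for every y ∈ [1/α*, 1]. -/
theorem optimal_threshold_unique
    (L U : ℝ) (hL : 0 < L) (hLU : L ≤ U)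
    (u u' : ℝ → ℝ)
    (hderiv : ∀ y ∈ Set.Icc (1 / (Real.log (U / L) + 1)) 1,
      HasDerivWithinAt u (u' y) (Set.Icc (1 / (Real.log (U / L) + 1)) 1) y)
    (hineq : ∀ y ∈ Set.Icc (1 / (Real.log (U / L) + 1)) 1,
      u' y ≤ (Real.log (U / L) + 1) * u y)
    (hu0 : u (1 / (Real.log (U / L) + 1)) = L) (hu1 : u 1 = U) :
    ∀ y ∈ Set.Icc (1 / (Real.log (U / L) + 1)) 1,
      u y = (L / Real.exp 1) * Real.exp ((Real.log (U / L) + 1) * y) := by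
  set α := Real.log (U / L) + 1 with hα
  have hlog : 0 ≤ Real.log (U / L) := Real.log_nonneg ((one_le_div hL).2 hLU)
  have hα1 : 1 ≤ α := by simp [hα]; linarith
  have hαpos : 0 < α := by linarith
  have ha1 : 1 / α ≤ 1 := by
    rw [div_le_one hαpos]; exact hα1
  set a := 1 / α with haa
  have hαa : α * a = 1 := by rw [haa, mul_one_div_cancel hαpos.ne']
  -- g y = u y * exp (-α y)
  set g : ℝ → ℝ := fun y => u y * Real.exp (-α * y) with hg
  have hgderiv : ∀ y ∈ Set.Icc a 1,
      HasDerivWithinAt g ((u' y - α * u y) * Real.exp (-α * y)) (Set.Icc a 1) y := by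
    intro y hy
    have h1 : HasDerivWithinAt (fun y => Real.exp (-α * y)) (-α * Real.exp (-α * y))
        (Set.Icc a 1) y := by
      have := ((hasDerivAt_id y).const_mul (-α)).exp
      simpa [mul_comm] using this.hasDerivWithinAt
    have := (hderiv y hy).fun_mul h1
    exact this.congr_deriv (by ring)
  have hgcont : ContinuousOn g (Set.Icc a 1) :=
    fun y hy => ((hgderiv y hy).continuousWithinAt)
  have hkey : ∀ x ∈ interior (Set.Icc a 1),
      HasDerivAt g ((u' x - α * u x) * Real.exp (-α * x)) x := by
    intro x hx
    rw [interior_Icc] at hx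
    have hx' : x ∈ Set.Icc a 1 := Set.Ioo_subset_Icc_self hx
    have hmem : Set.Icc a 1 ∈ nhds x := Icc_mem_nhds hx.1 hx.2
    exact (hgderiv x hx').hasDerivAt hmem
  have hanti : AntitoneOn g (Set.Icc a 1) := by
    apply antitoneOn_of_deriv_nonpos (convex_Icc a 1) hgcont
    · intro x hx
      exact (hkey x hx).differentiableAt.differentiableWithinAt
    · intro x hx
      rw [(hkey x hx).deriv]
      rw [interior_Icc] at hx
      have hx' : x ∈ Set.Icc a 1 := Set.Ioo_subset_Icc_self hx
      apply mul_nonpos_of_nonpos_of_nonneg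
      · have := hineq x hx'; linarith
      · positivity
  have hga : g a = L / Real.exp 1 := by
    have : -α * a = -1 := by rw [neg_mul, hαa]
    rw [hg]; simp only
    rw [this, hu0, Real.exp_neg]
    ring
  have hg1 : g 1 = L / Real.exp 1 := by
    have hU : 0 < U := lt_of_lt_of_le hL hLU
    rw [hg]; simp only
    rw [mul_one, hu1, hα, neg_add, Real.exp_add, Real.exp_neg, Real.exp_neg,
      Real.exp_log (by positivity : (0:ℝ) < U / L)]
    field_simp
  intro y hy
  have hmem_a : a ∈ Set.Icc a 1 := Set.left_mem_Icc.2 ha1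
  have hmem_1 : (1:ℝ) ∈ Set.Icc a 1 := Set.right_mem_Icc.2 ha1
  have h1 : g y ≤ g a := hanti hmem_a hy hy.1
  have h2 : g 1 ≤ g y := hanti hy hmem_1 hy.2
  have hgy : g y = L / Real.exp 1 := by rw [hga] at h1; rw [hg1] at h2; linarith
  have : u y * Real.exp (-α * y) = L / Real.exp 1 := hgy
  have hexp : Real.exp (-α * y) = (Real.exp (α * y))⁻¹ := by
    rw [← Real.exp_neg]; ring_nf
  rw [hexp] at this
  have hne : Real.exp (α * y) ≠ 0 := Real.exp_ne_zero _
  field_simp at this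
  rw [div_mul_eq_mul_div, eq_div_iff (Real.exp_ne_zero 1)]
  linarith [this]
end

section
/- Let 0 < L ≤ U, set θ = U/L and α* = ln θ + 1. Let N ≥ 1 and b : Fin N → [L,U] be any sequence; set m_i = max_{j ≤ i} b_j, y_0 = 0, y_i = (1 + ln(m_i/L))/α* for i ≥ 1, and x_i = y_i − y_{i−1}. Then x_i ≥ 0 for all i, y_N ≤ 1, and max_i b_i ≤ α* · Σ_{i=1}^N b_i·x_i. -/
lemma otp_key_ineq (a c : ℝ) (ha : 0 < a) (hac : a ≤ c) :
    c - a ≤ c * Real.log (c / a) := by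
  have hc : 0 < c := lt_of_lt_of_le ha hac
  have h1 : Real.log (a / c) ≤ a / c - 1 := Real.log_le_sub_one_of_pos (by positivity)
  have h2 : Real.log (a / c) = - Real.log (c / a) := by
    rw [← Real.log_inv]; congr 1; field_simp
  rw [h2] at h1
  have h5 : a / c - 1 = -((c - a) / c) := by field_simp; ring
  rw [h5] at h1
  have h4 : (c - a) / c ≤ Real.log (c / a) := by linarith
  have h6 := mul_le_mul_of_nonneg_left h4 hc.le
  calc c - a = c * ((c - a) / c) := by field_simp
    _ ≤ c * Real.log (c / a) := h6

theorem otp_optimal_threshold_algorithm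
    (L U : ℝ) (hL : 0 < L) (hLU : L ≤ U)
    (N : ℕ) (hN : 0 < N)
    (b : Fin N → ℝ) (hb : ∀ i, b i ∈ Set.Icc L U)
    (m : Fin N → ℝ) (hm : ∀ i, m i = (Finset.Iic i).sup' Finset.nonempty_Iic b)
    (y : ℕ → ℝ) (hy0 : y 0 = 0)
    (hy : ∀ i : Fin N, y (i.val + 1) = (1 + Real.log (m i / L)) / (Real.log (U / L) + 1))
    (x : Fin N → ℝ) (hx : ∀ i : Fin N, x i = y (i.val + 1) - y i.val) :
    (∀ i, 0 ≤ x i) ∧ y N ≤ 1 ∧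
    Finset.univ.sup' (Finset.univ_nonempty_iff.mpr (Fin.pos_iff_nonempty.mp hN)) b ≤
      (Real.log (U / L) + 1) * ∑ i : Fin N, b i * x i := by
  set α : ℝ := Real.log (U / L) + 1 with hα_def
  have hθ : (1:ℝ) ≤ U / L := (one_le_div hL).mpr hLU
  have hlog : 0 ≤ Real.log (U / L) := Real.log_nonneg hθ
  have hα0 : (0:ℝ) < α := by rw [hα_def]; linarith
  have hmL : ∀ i, L ≤ m i := by
    intro i
    rw [hm i]
    exact le_trans (hb i).1 (Finset.le_sup' b (Finset.mem_Iic.mpr le_rfl))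
  have hmU : ∀ i, m i ≤ U := by
    intro i
    rw [hm i]
    exact Finset.sup'_le _ _ fun j _ => (hb j).2
  have hm0 : ∀ i, 0 < m i := fun i => lt_of_lt_of_le hL (hmL i)
  have hmono : ∀ i j : Fin N, i ≤ j → m i ≤ m j := by
    intro i j hij
    rw [hm i, hm j]
    exact Finset.sup'_le _ _ fun k hk =>
      Finset.le_sup' b (Finset.mem_Iic.mpr (le_trans (Finset.mem_Iic.mp hk) hij))
  have hyval : ∀ i : Fin N, y (i.val + 1) = (1 + Real.log (m i / L)) / α := hy
  -- x nonneg
  have hxnn : ∀ i, 0 ≤ x i := by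
    intro i
    rw [hx i]
    rcases Nat.eq_zero_or_pos i.val with h0 | hpos
    · have h2 : y (i.val + 1) = (1 + Real.log (m i / L)) / α := hyval i
      rw [h0] at h2 ⊢
      rw [hy0, h2]
      have hlognn : 0 ≤ Real.log (m i / L) := Real.log_nonneg ((one_le_div hL).mpr (hmL i))
      have h3 : (0:ℝ) ≤ 1 + Real.log (m i / L) := by linarith
      rw [sub_zero]
      exact div_nonneg h3 hα0.le
    · obtain ⟨k, hk⟩ : ∃ k, i.val = k + 1 := ⟨i.val - 1, (Nat.succ_pred_eq_of_pos hpos).symm⟩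
      have hkN : k < N := lt_trans (by omega) i.isLt
      set i' : Fin N := ⟨k, hkN⟩ with hi'def
      have h1 : y i.val = (1 + Real.log (m i' / L)) / α := by
        rw [hk]; exact hyval i'
      have h2 : y (i.val + 1) = (1 + Real.log (m i / L)) / α := hyval i
      rw [h1, h2]
      have hle : m i' ≤ m i := hmono i' i (by rw [Fin.le_def]; show k ≤ i.val; omega)
      have hlogle : Real.log (m i' / L) ≤ Real.log (m i / L) :=
        Real.log_le_log (div_pos (hm0 i') hL) (by gcongr)
      rw [div_sub_div_same]
      exact div_nonneg (by linarith) hα0.le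
  refine ⟨hxnn, ?_, ?_⟩
  · -- y N ≤ 1
    set last : Fin N := ⟨N - 1, by omega⟩ with hlast
    have hNeq : last.val + 1 = N := by show N - 1 + 1 = N; omega
    have h2 : y N = (1 + Real.log (m last / L)) / α := by rw [← hNeq]; exact hyval last
    rw [h2]
    have hlogle : Real.log (m last / L) ≤ Real.log (U / L) :=
      Real.log_le_log (div_pos (hm0 last) hL) (by gcongr; exact hmU last)
    rw [div_le_one hα0, hα_def]
    linarith
  · -- main inequality
    have hbm0 : ∀ i : Fin N, i.val = 0 → b i = m i := by
      intro i h0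
      refine le_antisymm ?_ ?_
      · rw [hm i]; exact Finset.le_sup' b (Finset.mem_Iic.mpr le_rfl)
      · rw [hm i]
        refine Finset.sup'_le _ _ fun j hj => ?_
        have hji := Finset.mem_Iic.mp hj
        have : j = i := by
          apply Fin.ext
          have := Fin.le_def.mp hji
          omega
        rw [this]
    have key : ∀ n (h : n < N),
        m ⟨n, h⟩ ≤ α * ∑ i ∈ Finset.Iic (⟨n, h⟩ : Fin N), b i * x i := by
      intro n
      induction n with
      | zero =>
        intro h
        set i : Fin N := ⟨0, h⟩ with hidef
        have hIic : Finset.Iic i = {i} := by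
          ext j
          simp only [Finset.mem_Iic, Finset.mem_singleton, Fin.le_def]
          constructor
          · intro hj
            apply Fin.ext
            have : j.val ≤ i.val := hj
            have h0 : i.val = 0 := rfl
            omega
          · intro hj; rw [hj]
        rw [hIic, Finset.sum_singleton]
        have hbi : b i = m i := hbm0 i rfl
        have hxi : x i = (1 + Real.log (m i / L)) / α := by
          have h0 : i.val = 0 := rfl
          rw [hx i, hyval i, h0, hy0, sub_zero]
        rw [hbi, hxi]
        have hlognn : 0 ≤ Real.log (m i / L) := Real.log_nonneg ((one_le_div hL).mpr (hmL i))
        have heq : α * (m i * ((1 + Real.log (m i / L)) / α)) = m i * (1 + Real.log (m i / L)) := by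
          field_simp
        rw [heq]
        nlinarith [hm0 i]
      | succ k ih =>
        intro h
        have hkN : k < N := by omega
        set i : Fin N := ⟨k + 1, h⟩ with hidef
        set i' : Fin N := ⟨k, hkN⟩ with hi'def
        have hival : i.val = k + 1 := rfl
        have hIio : Finset.Iio i = Finset.Iic i' := by
          ext j
          simp only [Finset.mem_Iio, Finset.mem_Iic, Fin.lt_def, Fin.le_def]
          show j.val < k + 1 ↔ j.val ≤ k
          omega
        have hsplit : ∑ j ∈ Finset.Iic i, b j * x j
            = b i * x i + ∑ j ∈ Finset.Iic i', b j * x j := by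
          rw [← Finset.Iio_insert, Finset.sum_insert (by simp), hIio]
        have hxi : α * x i = Real.log (m i / L) - Real.log (m i' / L) := by
          have h1 : y i.val = (1 + Real.log (m i' / L)) / α := by
            rw [hival]; exact hyval i'
          have h2 : y (i.val + 1) = (1 + Real.log (m i / L)) / α := hyval i
          rw [hx i, h1, h2]
          field_simp
          ring
        have hle : m i' ≤ m i := hmono i' i (by rw [Fin.le_def]; show k ≤ k + 1; omega)
        have hstep : m i - m i' ≤ α * (b i * x i) := by
          rcases eq_or_lt_of_le hle with heq | hlt
          · have hx0 : x i = 0 := by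
              have hh := hxi
              rw [← heq, sub_self] at hh
              exact (mul_eq_zero.mp hh).resolve_left (ne_of_gt hα0)
            rw [hx0, ← heq]
            simp
          · have hbi : b i = m i := by
              obtain ⟨j, hj, hjeq⟩ := Finset.exists_mem_eq_sup' (Finset.nonempty_Iic) b
                (s := Finset.Iic i)
              rcases le_or_gt j i' with hji' | hji'
              · exfalso
                have hbj : b j ≤ m i' := by
                  rw [hm i']
                  exact Finset.le_sup' b (Finset.mem_Iic.mpr hji')
                have : m i = b j := by rw [hm i, hjeq]
                linarith [this ▸ hlt]
              · have hjle : j ≤ i := Finset.mem_Iic.mp hj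
                have hji : j = i := by
                  apply Fin.ext
                  have h1 : i'.val < j.val := hji'
                  have h2 : j.val ≤ i.val := hjle
                  have h3 : i'.val = k := rfl
                  omega
                rw [hm i, hjeq, hji]
            have hlogdiff : Real.log (m i / L) - Real.log (m i' / L)
                = Real.log (m i / m i') := by
              rw [Real.log_div (ne_of_gt (hm0 i)) (ne_of_gt hL),
                  Real.log_div (ne_of_gt (hm0 i')) (ne_of_gt hL),
                  Real.log_div (ne_of_gt (hm0 i)) (ne_of_gt (hm0 i'))]
              ring
            have habx : α * (b i * x i) = m i * Real.log (m i / m i') := by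
              rw [hbi]
              have : m i * (α * x i) = m i * Real.log (m i / m i') := by
                rw [hxi, hlogdiff]
              calc α * (m i * x i) = m i * (α * x i) := by ring
                _ = m i * Real.log (m i / m i') := this
            rw [habx]
            exact otp_key_ineq (m i') (m i) (hm0 i') hle
        rw [hsplit]
        have hih := ih hkN
        calc m i = (m i - m i') + m i' := by ring
          _ ≤ α * (b i * x i) + α * ∑ j ∈ Finset.Iic i', b j * x j := add_le_add hstep hih
          _ = α * (b i * x i + ∑ j ∈ Finset.Iic i', b j * x j) := by ring
    set last : Fin N := ⟨N - 1, by omega⟩ with hlast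
    have hIicLast : Finset.Iic last = Finset.univ := by
      ext j
      simp only [Finset.mem_Iic, Finset.mem_univ, iff_true, Fin.le_def]
      show j.val ≤ N - 1
      have := j.isLt
      omega
    have hsup : Finset.univ.sup' (Finset.univ_nonempty_iff.mpr (Fin.pos_iff_nonempty.mp hN)) b
        = m last := by
      rw [hm last]
      congr 1
      exact hIicLast.symm
    rw [hsup]
    have hkey := key (N - 1) (by omega)
    calc m last ≤ α * ∑ i ∈ Finset.Iic last, b i * x i := hkey
      _ = α * ∑ i : Fin N, b i * x i := by rw [hIicLast]
end

section
/- Let 0 < L ≤ U. For every ε > 0 there exist k ≥ 1 and a strictly increasing sequence b_1 < b_2 < … < b_k with b_1 = L and b_k = U such that b_1·(ln(b_1/L) + 1) + Σ_{i=2}^k b_i·ln(b_i/b_{i−1}) < U + ε. -/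
theorem worst_case_ratio_tightness
    (L U : ℝ) (hL : 0 < L) (hLU : L ≤ U) :
    ∀ ε > (0 : ℝ), ∃ (k : ℕ) (b : ℕ → ℝ), 1 ≤ k ∧ b 1 = L ∧ b k = U ∧
      (∀ i : ℕ, 1 ≤ i → i < k → b i < b (i + 1)) ∧
      b 1 * (Real.log (b 1 / L) + 1) +
        ∑ i ∈ Finset.Icc 2 k, b i * Real.log (b i / b (i - 1)) < U + ε := by
  intro ε hε
  rcases eq_or_lt_of_le hLU with heq | hlt
  · refine ⟨1, fun _ => L, le_refl 1, rfl, heq, ?_, ?_⟩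
    · intro i h1 h2; omega
    · simp [div_self hL.ne', Real.log_one]
      linarith
  · -- L < U
    set δ := ε / (U - L) with hδdef
    have hUL : 0 < U - L := by linarith
    have hδ : 0 < δ := div_pos hε hUL
    have h1δ : (1:ℝ) < 1 + δ := by linarith
    have hlog1δ : 0 < Real.log (1 + δ) := Real.log_pos h1δ
    obtain ⟨n, hn⟩ := exists_nat_gt (max 1 (Real.log (U / L) / Real.log (1 + δ)))
    have hn1 : 1 ≤ n := by
      have h1 : (1:ℝ) < n := (le_max_left 1 _).trans_lt hn
      exact_mod_cast h1.le
    have hn0 : (0:ℝ) < n := by positivity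
    have hnne : (n:ℝ) ≠ 0 := hn0.ne'
    have hn2 : Real.log (U / L) / Real.log (1 + δ) < n :=
      (le_max_right _ _).trans_lt hn
    have hU0 : 0 < U := lt_trans hL hlt
    have hULpos : 0 < U / L := div_pos hU0 hL
    have hUL1 : 1 < U / L := (one_lt_div hL).mpr hlt
    set r : ℝ := (U / L) ^ ((n:ℝ)⁻¹) with hrdef
    have hr1 : 1 < r := by
      rw [hrdef]
      exact (Real.one_lt_rpow_iff_of_pos hULpos).mpr (Or.inl ⟨hUL1, by positivity⟩)
    have hrpos : 0 < r := lt_trans one_pos hr1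
    have hrlt : r < 1 + δ := by
      have hexp : r = Real.exp (Real.log (U / L) * (n:ℝ)⁻¹) :=
        Real.rpow_def_of_pos hULpos _
      have hlt2 : Real.log (U / L) * (n:ℝ)⁻¹ < Real.log (1 + δ) := by
        rw [← div_eq_mul_inv, div_lt_iff₀ hn0]
        rw [div_lt_iff₀ hlog1δ] at hn2
        linarith
      calc r = Real.exp (Real.log (U / L) * (n:ℝ)⁻¹) := hexp
        _ < Real.exp (Real.log (1 + δ)) := Real.exp_lt_exp.mpr hlt2
        _ = 1 + δ := Real.exp_log (by linarith)
    have hrn : L * r ^ n = U := by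
      have : r ^ n = U / L := by
        rw [hrdef, ← Real.rpow_natCast ((U/L) ^ ((n:ℝ)⁻¹)) n,
          ← Real.rpow_mul hULpos.le, inv_mul_cancel₀ hnne, Real.rpow_one]
      rw [this]
      field_simp
    refine ⟨n + 1, fun i => L * r ^ (i - 1), by omega, ?_, ?_, ?_, ?_⟩
    · simp
    · simpa using hrn
    · intro i hi hik
      simp only
      have h : (i + 1) - 1 = (i - 1) + 1 := by omega
      rw [h, pow_succ]
      have hp : 0 < L * r ^ (i - 1) := by positivity
      nlinarith
    · have hfirst : L * r ^ (1 - 1) * (Real.log (L * r ^ (1 - 1) / L) + 1) = L := by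
        simp [div_self hL.ne']
      simp only
      rw [hfirst]
      have hsum : ∑ i ∈ Finset.Icc 2 (n + 1),
          L * r ^ (i - 1) * Real.log (L * r ^ (i - 1) / (L * r ^ (i - 1 - 1)))
          ≤ r * (U - L) := by
        rw [← Finset.Ico_add_one_right_eq_Icc, Finset.sum_Ico_eq_sum_range]
        have hidx : n + 1 + 1 - 2 = n := by omega
        rw [hidx]
        have hstep : ∀ j ∈ Finset.range n,
            L * r ^ (2 + j - 1) * Real.log (L * r ^ (2 + j - 1) / (L * r ^ (2 + j - 1 - 1)))
            ≤ (fun j => L * r ^ (j + 1)) (j + 1) - (fun j => L * r ^ (j + 1)) j := by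
          intro j _
          have e1 : 2 + j - 1 = j + 1 := by omega
          rw [e1]
          simp only [Nat.add_sub_cancel]
          have hratio : L * r ^ (j + 1) / (L * r ^ j) = r := by
            rw [pow_succ]
            field_simp
          rw [hratio]
          have hlogr : Real.log r ≤ r - 1 := Real.log_le_sub_one_of_pos hrpos
          have hpos : (0:ℝ) ≤ L * r ^ (j + 1) := by positivity
          have := mul_le_mul_of_nonneg_left hlogr hpos
          calc L * r ^ (j + 1) * Real.log r ≤ L * r ^ (j + 1) * (r - 1) := this
            _ = L * r ^ (j + 1 + 1) - L * r ^ (j + 1) := by ring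
        calc ∑ j ∈ Finset.range n,
              L * r ^ (2 + j - 1) * Real.log (L * r ^ (2 + j - 1) / (L * r ^ (2 + j - 1 - 1)))
            ≤ ∑ j ∈ Finset.range n,
              ((fun j => L * r ^ (j + 1)) (j + 1) - (fun j => L * r ^ (j + 1)) j) :=
              Finset.sum_le_sum hstep
          _ = L * r ^ (n + 1) - L * r ^ (0 + 1) := Finset.sum_range_sub (fun j => L * r ^ (j + 1)) n
          _ = r * (U - L) := by
              rw [pow_succ, ← mul_assoc, hrn]
              ring
      have hfin : r * (U - L) < U - L + ε := by
        have h1 : r * (U - L) < (1 + δ) * (U - L) := by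
          exact mul_lt_mul_of_pos_right hrlt hUL
        have h2 : δ * (U - L) = ε := by
          rw [hδdef]
          field_simp
        nlinarith
      linarith
end

section
/- Let 0 < L ≤ U and set θ = U/L. Let A : List ℝ → ℝ be any function (an online trading algorithm: A applied to the prefix (b_1,…,b_i) gives the amount x_i traded at the i-th rate) such that for every finite sequence b_1,…,b_N with each b_j ∈ [L,U], the trades x_i = A(b_1,…,b_i) satisfy x_i ≥ 0 for all i and Σ_{i=1}^N x_i ≤ 1. Then for every ε > 0 there exist N ≥ 1 and a sequence b_1,…,b_N ∈ [L,U] such that max_{1 ≤ i ≤ N} b_i > (ln θ + 1 − ε) · Σ_{i=1}^N b_i · A(b_1,…,b_i). -/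
set_option maxHeartbeats 1000000

private lemma otp_take_ofFn (f : ℕ → ℝ) (m n t : ℕ) (h1 : t ≤ m) (h2 : t ≤ n) :
    (List.ofFn (fun i : Fin m => f i)).take t = (List.ofFn (fun i : Fin n => f i)).take t := by
  apply List.ext_getElem
  · simp; omega
  · intro i h1' h2'
    simp [List.getElem_take, List.getElem_ofFn]

theorem otp_lower_bound_no_online_algorithm
    (L U : ℝ) (hL : 0 < L) (hLU : L ≤ U)
    (A : List ℝ → ℝ)
    (hA : ∀ (N : ℕ) (b : Fin N → ℝ), (∀ i, b i ∈ Set.Icc L U) →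
      (∀ i : Fin N, 0 ≤ A ((List.ofFn b).take (i.val + 1))) ∧
        ∑ i : Fin N, A ((List.ofFn b).take (i.val + 1)) ≤ 1) :
    ∀ ε > (0 : ℝ), ∃ (N : ℕ) (hN : 0 < N) (b : Fin N → ℝ),
      (∀ i, b i ∈ Set.Icc L U) ∧
      (Real.log (U / L) + 1 - ε) *
          ∑ i : Fin N, b i * A ((List.ofFn b).take (i.val + 1)) <
        Finset.univ.sup' (Finset.univ_nonempty_iff.mpr (Fin.pos_iff_nonempty.mp hN)) b := by
  intro ε hε
  by_contra hcon
  push_neg at hcon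
  set θ : ℝ := U / L with hθdef
  have hθ1 : 1 ≤ θ := (one_le_div hL).mpr hLU
  have hθ0 : (0:ℝ) < θ := lt_of_lt_of_le one_pos hθ1
  set lθ : ℝ := Real.log θ with hlθdef
  have hlθ0 : 0 ≤ lθ := Real.log_nonneg hθ1
  set c : ℝ := lθ + 1 - ε with hcdef
  -- choose k large
  obtain ⟨k0, hk0⟩ := exists_nat_gt (lθ^2 / ε)
  set k : ℕ := k0 + 1 with hkdef
  have hkpos : (0:ℝ) < (k:ℝ) := by positivity
  have hkε : lθ^2 / (k:ℝ) < ε := by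
    rw [div_lt_iff₀ hkpos]
    have : lθ^2 / ε < (k:ℝ) := lt_of_lt_of_le hk0 (by exact_mod_cast Nat.le_succ k0)
    rw [div_lt_iff₀ hε] at this
    linarith
  set s : ℝ := θ ^ ((k:ℝ)⁻¹) with hsdef
  have hs1 : 1 ≤ s := Real.one_le_rpow hθ1 (by positivity)
  have hs0 : (0:ℝ) < s := lt_of_lt_of_le one_pos hs1
  have hsk : s ^ (k:ℕ) = θ := by
    rw [hsdef, ← Real.rpow_natCast (θ ^ ((k:ℝ)⁻¹)) k, ← Real.rpow_mul hθ0.le,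
      inv_mul_cancel₀ (ne_of_gt hkpos), Real.rpow_one]
  have hsexp : s = Real.exp (lθ / (k:ℝ)) := by
    rw [hsdef, Real.rpow_def_of_pos hθ0, hlθdef, div_eq_mul_inv]
  -- key analytic estimate : k * (1 - s⁻¹) > lθ - ε
  have hkey0 : lθ - ε < (k:ℝ) * (1 - s⁻¹) := by
    have ha : (0:ℝ) ≤ lθ / k := by positivity
    have hexp : Real.exp (-(lθ/k)) ≤ 1 - lθ/k + (lθ/k)^2 := by
      have h1 : lθ/k + 1 ≤ Real.exp (lθ/k) := Real.add_one_le_exp _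
      have h3 : (0:ℝ) < Real.exp (lθ/k) := Real.exp_pos _
      have h4 : (0:ℝ) < 1 - lθ/k + (lθ/k)^2 := by nlinarith
      rw [Real.exp_neg, inv_le_iff_one_le_mul₀ h3]
      nlinarith [mul_le_mul_of_nonneg_left h1 h4.le]
    have hsinv : s⁻¹ = Real.exp (-(lθ/k)) := by rw [hsexp, ← Real.exp_neg]
    rw [hsinv]
    have hk2 : (k:ℝ) * (lθ/k) = lθ := by field_simp
    have hk3 : (k:ℝ) * (lθ/k)^2 = lθ^2/k := by field_simp
    nlinarith [mul_le_mul_of_nonneg_left hexp hkpos.le]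
  -- the rates (opaque)
  obtain ⟨r, hr⟩ : ∃ r : ℕ → ℝ, ∀ j, r j = L * s ^ j :=
    ⟨fun j => L * s ^ j, fun _ => rfl⟩
  have hrpos : ∀ j, 0 < r j := fun j => by rw [hr]; positivity
  have hrmem : ∀ j, j ≤ k → r j ∈ Set.Icc L U := by
    intro j hj
    rw [hr]
    constructor
    · have h1 : (1:ℝ) ≤ s ^ j := one_le_pow₀ hs1
      nlinarith
    · have h1 : s ^ j ≤ s ^ k := pow_le_pow_right₀ hs1 hj
      have h2 : L * s ^ k = U := by rw [hsk, hθdef]; field_simp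
      nlinarith
  have hrsucc : ∀ j, r (j+1) = r j * s := by
    intro j; rw [hr, hr, pow_succ]; ring
  -- the algorithm's moves on the full sequence (opaque)
  obtain ⟨x, hx⟩ : ∃ x : ℕ → ℝ,
      ∀ j, x j = A ((List.ofFn (fun i : Fin (k+1) => r i)).take (j+1)) :=
    ⟨fun j => A ((List.ofFn (fun i : Fin (k+1) => r i)).take (j+1)), fun _ => rfl⟩
  obtain ⟨hx0, hxsum⟩ := hA (k+1) (fun i : Fin (k+1) => r i)
    (fun i => hrmem i (Nat.lt_succ_iff.mp i.isLt))
  have hx0' : ∀ j, j ≤ k → 0 ≤ x j := by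
    intro j hj
    rw [hx]
    exact hx0 ⟨j, Nat.lt_succ_of_le hj⟩
  have hxsum' : ∑ j ∈ Finset.range (k+1), x j ≤ 1 := by
    calc ∑ j ∈ Finset.range (k+1), x j
        = ∑ i : Fin (k+1), A ((List.ofFn (fun i : Fin (k+1) => r i)).take (i.val+1)) := by
          rw [← Fin.sum_univ_eq_sum_range]
          exact Finset.sum_congr rfl (fun i _ => hx i.val)
      _ ≤ 1 := hxsum
  -- partial gains (opaque)
  obtain ⟨S, hS⟩ : ∃ S : ℕ → ℝ, ∀ m, S m = ∑ i ∈ Finset.range m, r i * x i :=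
    ⟨fun m => ∑ i ∈ Finset.range m, r i * x i, fun _ => rfl⟩
  have hSsucc : ∀ m, S (m+1) = S m + r m * x m := by
    intro m; rw [hS, hS, Finset.sum_range_succ]
  -- key consequence of hcon
  have hkey : ∀ j, j ≤ k → r j ≤ c * S (j+1) := by
    intro j hj
    have hmem : ∀ i : Fin (j+1), (fun i : Fin (j+1) => r i) i ∈ Set.Icc L U :=
      fun i => hrmem i (le_trans (Nat.lt_succ_iff.mp i.isLt) hj)
    have h := hcon (j+1) (Nat.succ_pos j) (fun i : Fin (j+1) => r i) hmem
    have hsup : r j ≤ Finset.univ.sup'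
        (Finset.univ_nonempty_iff.mpr (Fin.pos_iff_nonempty.mp (Nat.succ_pos j)))
        (fun i : Fin (j+1) => r i) := by
      have := Finset.le_sup' (fun i : Fin (j+1) => r (i : ℕ)) (Finset.mem_univ (Fin.last j))
      simpa only [Fin.val_last] using this
    have hAeq : ∀ i : Fin (j+1),
        A ((List.ofFn (fun i : Fin (j+1) => r i)).take (i.val+1)) = x i.val := by
      intro i
      rw [hx]
      congr 1
      exact otp_take_ofFn r (j+1) (k+1) (i.val+1) i.isLt (by omega)
    have hsumeq : ∑ i : Fin (j+1), (fun i : Fin (j+1) => r i) i *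
        A ((List.ofFn (fun i : Fin (j+1) => r i)).take (i.val+1)) = S (j+1) := by
      rw [hS, ← Fin.sum_univ_eq_sum_range (fun i => r i * x i) (j+1)]
      exact Finset.sum_congr rfl (fun i _ => by rw [hAeq i])
    rw [hsumeq] at h
    exact le_trans hsup h
  -- case split on the sign of c
  rcases le_or_gt c 0 with hc | hc
  · have h0 := hkey 0 (Nat.zero_le k)
    have hS1 : S 1 = r 0 * x 0 := by rw [hS, Finset.sum_range_one]
    have hx00 : 0 ≤ x 0 := hx0' 0 (Nat.zero_le k)
    have hr0 : (0:ℝ) < r 0 := hrpos 0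
    rw [hS1] at h0
    nlinarith [mul_nonneg hr0.le hx00]
  -- main induction
  · have main : ∀ m, m ≤ k →
        S (m+1) / r m + (m:ℝ) * (1 - s⁻¹) / c ≤ ∑ j ∈ Finset.range (m+1), x j := by
      intro m
      induction m with
      | zero =>
        intro _
        have hS1 : S 1 = r 0 * x 0 := by rw [hS, Finset.sum_range_one]
        rw [hS1, Finset.sum_range_one]
        have hr0 : r 0 ≠ 0 := ne_of_gt (hrpos 0)
        have : r 0 * x 0 / r 0 = x 0 := by field_simp
        rw [this]; simp
      | succ m ih =>
        intro hm
        have hm' : m ≤ k := le_of_lt (Nat.lt_of_succ_le hm)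
        have ih' := ih hm'
        rw [Finset.sum_range_succ]
        have hrm : (0:ℝ) < r m := hrpos m
        have hrm1 : (0:ℝ) < r (m+1) := hrpos (m+1)
        have hxeq : x (m+1) = (S (m+2) - S (m+1)) / r (m+1) := by
          rw [hSsucc (m+1)]
          field_simp
          ring
        have hSm : r m ≤ c * S (m+1) := hkey m hm'
        have hratio : r (m+1) = r m * s := hrsucc m
        have hs1' : s⁻¹ ≤ 1 := inv_le_one_of_one_le₀ hs1
        have hsinvpos : (0:ℝ) < s⁻¹ := by positivity
        have hgain : (1 - s⁻¹) / c ≤ S (m+1) * (1 / r m - 1 / r (m+1)) := by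
          have hdiff : 1 / r m - 1 / r (m+1) = (1 - s⁻¹) / r m := by
            rw [hratio]
            field_simp
          rw [hdiff]
          have hSpos : r m / c ≤ S (m+1) := by
            rw [div_le_iff₀ hc]
            linarith [hSm, (mul_comm c (S (m+1)) : c * S (m+1) = S (m+1) * c)]
          have hfac : (0:ℝ) ≤ (1 - s⁻¹) / r m := div_nonneg (by linarith) hrm.le
          calc (1 - s⁻¹) / c = (r m / c) * ((1 - s⁻¹) / r m) := by
                field_simp
            _ ≤ S (m+1) * ((1 - s⁻¹) / r m) := mul_le_mul_of_nonneg_right hSpos hfac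
        have expand : S (m+2) / r (m+1) + ((m:ℝ)+1) * (1 - s⁻¹) / c
            ≤ S (m+1) / r m + (m:ℝ) * (1 - s⁻¹) / c + x (m+1) := by
          rw [hxeq]
          have e1 : S (m+1) / r m = S (m+1) * (1 / r m) := by ring
          have e2 : (S (m+2) - S (m+1)) / r (m+1)
              = S (m+2) / r (m+1) - S (m+1) * (1 / r (m+1)) := by ring
          rw [e2]
          have hgain2 := hgain
          rw [mul_sub] at hgain2
          have hc1 : ((m:ℝ)+1) * (1 - s⁻¹) / c = (m:ℝ) * (1 - s⁻¹) / c + (1 - s⁻¹) / c := by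
            ring
          rw [hc1]
          linarith [hgain2, e1]
        push_cast
        linarith [expand, ih']
    have hfin := main k le_rfl
    have hSk : r k ≤ c * S (k+1) := hkey k le_rfl
    have hrk : (0:ℝ) < r k := hrpos k
    have h1c : 1 / c ≤ S (k+1) / r k := by
      rw [div_le_div_iff₀ hc hrk]
      linarith
    have hlast : (1 + ((k:ℝ) * (1 - s⁻¹))) / c ≤ 1 := by
      have he : (1 + ((k:ℝ) * (1 - s⁻¹))) / c = 1/c + (k:ℝ) * (1 - s⁻¹) / c := by ring
      rw [he]
      linarith [hfin, hxsum', h1c]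
    have hcc : c < 1 + (k:ℝ) * (1 - s⁻¹) := by
      rw [hcdef]; linarith [hkey0]
    rw [div_le_one hc] at hlast
    linarith
end

section
/- Let L > 0, α > 0, k ≥ 1, and let w_1,…,w_k > 0 and b_1,…,b_k ≥ L be real numbers. Suppose ω := Σ_{i=1}^k w_i satisfies 1/α ≤ ω ≤ 1. Then L·(1 − ω) + Σ_{i=1}^k w_i·b_i ≤ α · Σ_{i=1}^k w_i·b_i. -/
theorem okp_initial_inequality
    (L α : ℝ) (hL : 0 < L) (hα : 0 < α)
    (k : ℕ) (hk : 1 ≤ k) (w b : ℕ → ℝ)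
    (hw : ∀ i : ℕ, 1 ≤ i → i ≤ k → 0 < w i)
    (hb : ∀ i : ℕ, 1 ≤ i → i ≤ k → L ≤ b i)
    (hω1 : 1 / α ≤ ∑ i ∈ Finset.Icc 1 k, w i)
    (hω2 : ∑ i ∈ Finset.Icc 1 k, w i ≤ 1) :
    L * (1 - ∑ i ∈ Finset.Icc 1 k, w i) + ∑ i ∈ Finset.Icc 1 k, w i * b i ≤
      α * ∑ i ∈ Finset.Icc 1 k, w i * b i := by
  set ω := ∑ i ∈ Finset.Icc 1 k, w i with hωdef
  set S := ∑ i ∈ Finset.Icc 1 k, w i * b i with hSdef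
  have hS : L * ω ≤ S := by
    rw [hωdef, hSdef, Finset.mul_sum]
    refine Finset.sum_le_sum fun i hi => ?_
    rw [Finset.mem_Icc] at hi
    rw [mul_comm]
    exact mul_le_mul_of_nonneg_left (hb i hi.1 hi.2) (hw i hi.1 hi.2).le
  have hα1 : 1 ≤ α := by
    have h1 : 1 / α ≤ 1 := hω1.trans hω2
    rwa [div_le_one hα] at h1
  have hαω : 1 ≤ α * ω := by
    have := (div_le_iff₀ hα).mp hω1
    linarith [mul_comm ω α]
  nlinarith [mul_le_mul_of_nonneg_left hS (sub_nonneg.mpr hα1), hL.le]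
end
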